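/- Let δ, δ̃ ≥ 0, N ≥ 1, and let ψ_δ : Q × Q → ℝ be convex in its first argument with ψ_δ(x, x) = 0 for all x ∈ Q. Let z₀, …, z_N ∈ Q, w₀, …, w_{N−1} ∈ Q and L₁, …, L_N > 0 be such that for each k = 0, …, N−1: (a) w_k is a δ̃-approximate minimizer on Q of x ↦ ψ_δ(x, z_k) + L_{k+1}·V[z_k](x); (b) z_{k+1} is a δ̃-approximate minimizer on Q of x ↦ ψ_δ(x, w_k) + L_{k+1}·V[z_k](x); (c) ψ_δ(z_{k+1}, z_k) ≤ ψ_δ(z_{k+1}, w_k) + ψ_δ(w_k, z_k) + L_{k+1}·(V[z_k](w_k) + V[w_k](z_{k+1})) + δ. Then, with S_N := ∑_{k=0}^{N−1} 1/L_{k+1}, for every x ∈ Q: −(1/S_N)·∑_{k=0}^{N−1} ψ_δ(x, w_k)/L_{k+1} ≤ V[z₀](x)/S_N + δ + 2·δ̃. -/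

import Mathlib

open RealInnerProductSpace Finset

/-- The Bregman divergence `V[y](x) = d(x) - d(y) - ⟪∇d(y), x - y⟫` generated by `d`
with gradient map `Dd`. -/
noncomputable def breg {E : Type*} [NormedAddCommGroup E] [InnerProductSpace ℝ E]
    (d : E → ℝ) (Dd : E → E) (y x : E) : ℝ :=
  d x - d y - ⟪Dd y, x - y⟫

/-- `g` is a subgradient of `ψ` at `z` (relative to the set `Q`). -/
def IsSubgradOn {E : Type*} [NormedAddCommGroup E] [InnerProductSpace ℝ E]
    (Q : Set E) (ψ : E → ℝ) (z g : E) : Prop :=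
  ∀ x ∈ Q, ψ z + ⟪g, x - z⟫ ≤ ψ x

/-- `ψ` is `m`-strongly convex relative to `d` on `Q`, where `V` is the Bregman
divergence generated by `d`. -/
def StrongRelConvexOn {E : Type*} [NormedAddCommGroup E] [InnerProductSpace ℝ E]
    (Q : Set E) (V : E → E → ℝ) (m : ℝ) (ψ : E → ℝ) : Prop :=
  ∀ z ∈ Q, ∀ g : E, IsSubgradOn Q ψ z g → ∀ x ∈ Q, ψ z + ⟪g, x - z⟫ + m * V z x ≤ ψ x

/-- `y` is a `δ`-approximate minimizer of `Ψ` on `Q`: there exists a subgradient `h`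
of `Ψ` at `y` such that `⟪h, x - y⟫ ≥ -δ` for all `x ∈ Q`. -/
def IsApproxMinOn {E : Type*} [NormedAddCommGroup E] [InnerProductSpace ℝ E]
    (Q : Set E) (Ψ : E → ℝ) (δ : ℝ) (y : E) : Prop :=
  y ∈ Q ∧ ∃ h : E, IsSubgradOn Q Ψ y h ∧ ∀ x ∈ Q, -δ ≤ ⟪h, x - y⟫

/-! If `h` is a subgradient of `ψ + L·V[z]` at `u`, then `h - L(∇d(u) - ∇d(z))` is a subgradient
of the convex function `ψ` (a directional-derivative argument along segments), and the
three-point identity `V[z](x) = V[z](u) + ⟪∇d(u) - ∇d(z), x - u⟫ + V[u](x)` turns this into a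
three-point inequality. Applying it to `w_k` (tested at `z_{k+1}`) and to `z_{k+1}` (tested at
`x`) and adding the line-search condition (c), everything cancels except
`L_{k+1} (V[z_{k+1}](x) - V[z_k](x)) - δ - 2δ̃ ≤ ψ_δ(x, w_k)`. Dividing by `L_{k+1}`, the sum over
`k` telescopes, and `V[z_N](x) ≥ 0` by convexity of `d`. -/

section BregmanDivergence

variable {E : Type*} [NormedAddCommGroup E] [InnerProductSpace ℝ E]

lemma breg_eq_breg_add_inner_add_breg (d : E → ℝ) (Dd : E → E) (z u x : E) :
    breg d Dd z x = breg d Dd z u + ⟪Dd u - Dd z, x - u⟫ + breg d Dd u x := by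
  simp only [breg, inner_sub_left, inner_sub_right]
  ring

variable [CompleteSpace E]

lemma HasGradientAt.hasDerivAt_lineMap {f : E → ℝ} {G u : E} (hf : HasGradientAt f G u)
    (x : E) : HasDerivAt (fun t : ℝ => f (AffineMap.lineMap u x t)) ⟪G, x - u⟫ 0 := by
  have hf' : HasFDerivAt f (InnerProductSpace.toDual ℝ E G) (AffineMap.lineMap u x (0 : ℝ)) := by
    simpa using hasGradientAt_iff_hasFDerivAt.mp hf
  exact hf'.comp_hasDerivAt (0 : ℝ) AffineMap.hasDerivAt_lineMap

lemma HasDerivAt.le_of_mul_le_sub {φ : ℝ → ℝ} {φ' c : ℝ} (hφ : HasDerivAt φ φ' 0)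
    (h : ∀ t ∈ Set.Ioc (0 : ℝ) 1, c * t ≤ φ t - φ 0) : c ≤ φ' := by
  refine ge_of_tendsto ((hasDerivWithinAt_iff_tendsto_slope' Set.self_notMem_Ioi).mp
    (hφ.hasDerivWithinAt (s := Set.Ioi 0))) ?_
  filter_upwards [Ioc_mem_nhdsGT (zero_lt_one' ℝ)] with t ht
  rw [slope_def_field, sub_zero, le_div_iff₀ ht.1]
  exact h t ht

lemma breg_nonneg {d : E → ℝ} {Dd : E → E} (hd_conv : ConvexOn ℝ Set.univ d)
    {y : E} (hd : HasGradientAt d (Dd y) y) (x : E) : 0 ≤ breg d Dd y x := by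
  have hline := (hd_conv.comp_affineMap (AffineMap.lineMap y x)).le_slope_of_hasDerivAt
    (Set.mem_univ 0) (Set.mem_univ 1) zero_lt_one (hd.hasDerivAt_lineMap x)
  simp only [slope_def_field, Function.comp_apply, AffineMap.lineMap_apply_zero,
    AffineMap.lineMap_apply_one, sub_zero, div_one] at hline
  unfold breg
  linarith

lemma hasGradientAt_breg {d : E → ℝ} {Dd : E → E} {u : E} (hd : HasGradientAt d (Dd u) u)
    (z : E) : HasGradientAt (breg d Dd z) (Dd u - Dd z) u := by
  rw [hasGradientAt_iff_hasFDerivAt] at hd ⊢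
  have hlin : HasFDerivAt (fun x => ⟪Dd z, x - z⟫) (innerSL ℝ (Dd z)) u :=
    (innerSL ℝ (Dd z)).hasFDerivAt.comp u ((hasFDerivAt_id u).sub_const z) |>.congr_fderiv
      (by ext; simp)
  exact ((hd.sub_const (d z)).sub hlin).congr_fderiv (by ext; simp)

lemma HasGradientAt.const_mul {f : E → ℝ} {G u : E} (hf : HasGradientAt f G u) (c : ℝ) :
    HasGradientAt (fun x => c * f x) (c • G) u := by
  rw [hasGradientAt_iff_hasFDerivAt] at hf ⊢
  exact (hf.const_mul c).congr_fderiv (by ext; simp)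

lemma IsSubgradOn.sub_of_hasGradientAt {Q : Set E} {f g : E → ℝ} {u h G : E}
    (hf : ConvexOn ℝ Q f) (hu : u ∈ Q) (hg : HasGradientAt g G u)
    (hsub : IsSubgradOn Q (fun x => f x + g x) u h) : IsSubgradOn Q f u (h - G) := by
  intro x hx
  have hslope : ⟪h, x - u⟫ - (f x - f u) ≤ ⟪G, x - u⟫ := by
    refine (hg.hasDerivAt_lineMap x).le_of_mul_le_sub fun t ht => ?_
    have hsub_t := hsub _ (hf.1.lineMap_mem hu hx ⟨ht.1.le, ht.2⟩)
    have hf_t : f (AffineMap.lineMap u x t) ≤ (1 - t) * f u + t * f x := by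
      simpa [AffineMap.lineMap_apply_module] using
        hf.2 hu hx (sub_nonneg.mpr ht.2) ht.1.le (sub_add_cancel 1 t)
    rw [← vsub_eq_sub, AffineMap.lineMap_vsub_left, vsub_eq_sub, real_inner_smul_right]
      at hsub_t
    simp only [AffineMap.lineMap_apply_zero]
    linarith
  rw [inner_sub_left]
  linarith

lemma IsSubgradOn.add_breg_le {Q : Set E} {ψ d : E → ℝ} {Dd : E → E} {L : ℝ} {z u h : E}
    (hψ : ConvexOn ℝ Q ψ) (hu : u ∈ Q) (hd : HasGradientAt d (Dd u) u)
    (hsub : IsSubgradOn Q (fun x => ψ x + L * breg d Dd z x) u h) {x : E} (hx : x ∈ Q) :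
    ψ u + L * breg d Dd z u + ⟪h, x - u⟫ + L * breg d Dd u x ≤ ψ x + L * breg d Dd z x := by
  have hψ_sub := hsub.sub_of_hasGradientAt hψ hu ((hasGradientAt_breg hd z).const_mul L) x hx
  rw [inner_sub_left, real_inner_smul_left] at hψ_sub
  rw [breg_eq_breg_add_inner_add_breg d Dd z u x]
  linear_combination hψ_sub

end BregmanDivergence

lemma neg_sum_div_le_of_mul_sub_le {N : ℕ} {v a ℓ : ℕ → ℝ} {c : ℝ}
    (hstep : ∀ k < N, ℓ k * v (k + 1) - ℓ k * v k - c ≤ a k) (hℓ : ∀ k < N, 0 < ℓ k)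
    (hv : 0 ≤ v N) :
    -∑ k ∈ range N, a k / ℓ k ≤ v 0 + c * ∑ k ∈ range N, 1 / ℓ k := by
  have hterm : ∀ k ∈ range N, -(a k / ℓ k) ≤ (v k - v (k + 1)) + c * (1 / ℓ k) := by
    intro k hk
    have hk := mem_range.mp hk
    have hdiv := div_le_div_of_nonneg_right (hstep k hk) (hℓ k hk).le
    have hsimp : (ℓ k * v (k + 1) - ℓ k * v k - c) / ℓ k = v (k + 1) - v k - c * (1 / ℓ k) := by
      field_simp [(hℓ k hk).ne']
    linarith
  have hsum := sum_le_sum hterm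
  rw [sum_neg_distrib, sum_add_distrib, sum_range_sub' v, ← mul_sum] at hsum
  linarith

theorem mirrorProx_step {E : Type*} [NormedAddCommGroup E] [InnerProductSpace ℝ E]
    [CompleteSpace E] {Q : Set E} {d : E → ℝ} {Dd : E → E}
    (hd : ∀ x, HasGradientAt d (Dd x) x) {ψ : E → E → ℝ} {L δ δt : ℝ} {z w z' x : E}
    (hψz : ConvexOn ℝ Q fun y => ψ y z) (hψw : ConvexOn ℝ Q fun y => ψ y w)
    (hw : IsApproxMinOn Q (fun y => ψ y z + L * breg d Dd z y) δt w)
    (hz' : IsApproxMinOn Q (fun y => ψ y w + L * breg d Dd z y) δt z')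
    (hls : ψ z' z ≤ ψ z' w + ψ w z + L * (breg d Dd z w + breg d Dd w z') + δ)
    (hx : x ∈ Q) :
    L * breg d Dd z' x - L * breg d Dd z x - (δ + 2 * δt) ≤ ψ x w := by
  obtain ⟨hwQ, gw, hgw, hgw_approx⟩ := hw
  obtain ⟨hz'Q, gz', hgz', hgz'_approx⟩ := hz'
  have hw_three := hgw.add_breg_le hψz hwQ (hd w) hz'Q
  have hz'_three := hgz'.add_breg_le hψw hz'Q (hd z') hx
  linarith [hgw_approx z' hz'Q, hgz'_approx x hx]

theorem stmt11_general
    {E : Type*} [NormedAddCommGroup E] [InnerProductSpace ℝ E] [FiniteDimensional ℝ E]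
    (Q : Set E)
    (d : E → ℝ) (Dd : E → E)
    (hd_conv : ConvexOn ℝ Set.univ d) (hd_diff : ∀ x, HasGradientAt d (Dd x) x)
    (ψδ : E → E → ℝ)
    (hconv : ∀ y ∈ Q, ConvexOn ℝ Q fun x => ψδ x y)
    (δ δt : ℝ)
    (N : ℕ) (hN : 1 ≤ N)
    (z w : ℕ → E) (L : ℕ → ℝ)
    (hzQ : ∀ k ≤ N, z k ∈ Q)
    (hLpos : ∀ k < N, 0 < L (k + 1))
    (hwmin : ∀ k < N,
      IsApproxMinOn Q (fun x => ψδ x (z k) + L (k + 1) * breg d Dd (z k) x) δt (w k))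
    (hzmin : ∀ k < N,
      IsApproxMinOn Q (fun x => ψδ x (w k) + L (k + 1) * breg d Dd (z k) x) δt (z (k + 1)))
    (hls : ∀ k < N,
      ψδ (z (k + 1)) (z k) ≤ ψδ (z (k + 1)) (w k) + ψδ (w k) (z k)
        + L (k + 1) * (breg d Dd (z k) (w k) + breg d Dd (w k) (z (k + 1))) + δ) :
    ∀ x ∈ Q,
      -(1 / ∑ k ∈ Finset.range N, 1 / L (k + 1))
          * ∑ k ∈ Finset.range N, ψδ x (w k) / L (k + 1) ≤
        breg d Dd (z 0) x / (∑ k ∈ Finset.range N, 1 / L (k + 1)) + δ + 2 * δt := by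
  intro x hx
  set S := ∑ k ∈ range N, 1 / L (k + 1)
  have hS : 0 < S := sum_pos (fun k hk => one_div_pos.mpr (hLpos k (mem_range.mp hk)))
    (nonempty_range_iff.mpr (by omega))
  have hsum := neg_sum_div_le_of_mul_sub_le (v := fun k => breg d Dd (z k) x)
    (a := fun k => ψδ x (w k)) (ℓ := fun k => L (k + 1)) (c := δ + 2 * δt)
    (fun k hk => mirrorProx_step hd_diff (hconv _ (hzQ k hk.le)) (hconv _ (hwmin k hk).1)
      (hwmin k hk) (hzmin k hk) (hls k hk) hx)
    hLpos (breg_nonneg hd_conv (hd_diff _) x)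
  calc -(1 / S) * ∑ k ∈ range N, ψδ x (w k) / L (k + 1)
      = (-∑ k ∈ range N, ψδ x (w k) / L (k + 1)) / S := by ring
    _ ≤ (breg d Dd (z 0) x + (δ + 2 * δt) * S) / S := by gcongr
    _ = breg d Dd (z 0) x / S + δ + 2 * δt := by field_simp; ring

/-- Theorem 4.5, first inequality: aggregate guarantee of the generalized
Mirror-Prox method for an abstract variational inequality with a `(δ, L, V)`-model. -/
theorem stmt11
    {E : Type*} [NormedAddCommGroup E] [InnerProductSpace ℝ E] [FiniteDimensional ℝ E]
    (Q : Set E) (hQ : Convex ℝ Q)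
    (d : E → ℝ) (Dd : E → E)
    (hd_conv : ConvexOn ℝ Set.univ d) (hd_diff : ∀ x, HasGradientAt d (Dd x) x)
    (ψδ : E → E → ℝ)
    (hconv : ∀ y ∈ Q, ConvexOn ℝ Q fun x => ψδ x y)
    (hzero : ∀ x ∈ Q, ψδ x x = 0)
    (δ δt : ℝ) (hδ : 0 ≤ δ) (hδt : 0 ≤ δt)
    (N : ℕ) (hN : 1 ≤ N)
    (z w : ℕ → E) (L : ℕ → ℝ)
    (hzQ : ∀ k ≤ N, z k ∈ Q) (hwQ : ∀ k < N, w k ∈ Q)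
    (hLpos : ∀ k < N, 0 < L (k + 1))
    (hwmin : ∀ k < N,
      IsApproxMinOn Q (fun x => ψδ x (z k) + L (k + 1) * breg d Dd (z k) x) δt (w k))
    (hzmin : ∀ k < N,
      IsApproxMinOn Q (fun x => ψδ x (w k) + L (k + 1) * breg d Dd (z k) x) δt (z (k + 1)))
    (hls : ∀ k < N,
      ψδ (z (k + 1)) (z k) ≤ ψδ (z (k + 1)) (w k) + ψδ (w k) (z k)
        + L (k + 1) * (breg d Dd (z k) (w k) + breg d Dd (w k) (z (k + 1))) + δ) :
    ∀ x ∈ Q,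
      -(1 / ∑ k ∈ Finset.range N, 1 / L (k + 1))
          * ∑ k ∈ Finset.range N, ψδ x (w k) / L (k + 1) ≤
        breg d Dd (z 0) x / (∑ k ∈ Finset.range N, 1 / L (k + 1)) + δ + 2 * δt :=
  stmt11_general Q d Dd hd_conv hd_diff ψδ hconv δ δt N hN z w L hzQ hLpos hwmin hzmin hls
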